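/- For any smooth compactly supported function v on R^n with n ≥ 3 and any R > 0, the weighted mixed-norm estimate R^{1/2} · ||v||_{L^∞_r L^2_ω(|x|>R)} ≤ C || |x|^{-(n-3)/2} ∇v ||_{L^2(|x|>R)} holds, where ||h||_{L^∞_r L^2_ω(|x|>R)} = sup_{r>R} ( ∫_{S^{n-1}} |h(rω)|^2 dω )^{1/2} and C depends only on n. -/

import Mathlib

open MeasureTheory Real

section Aux

open Set Metric

variable {E : Type*} [NormedAddCommGroup E] [NormedSpace ℝ E]

lemma ray_cs {ψ : ℝ → ℝ} (hψ : Continuous ψ) {r b : ℝ}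
    (hr : 0 < r) (hrb : r ≤ b) :
    ∫ s in r..b, ψ s ≤ Real.sqrt r⁻¹ * Real.sqrt (∫ s in r..b, s ^ 2 * ψ s ^ 2) := by
  set B := ∫ s in r..b, s ^ 2 * ψ s ^ 2 with hB
  have hcont2 : Continuous fun s : ℝ => s ^ 2 * ψ s ^ 2 := by continuity
  have hBnn : 0 ≤ B := intervalIntegral.integral_nonneg hrb
    (fun s _ => mul_nonneg (sq_nonneg _) (sq_nonneg _))
  rcases eq_or_lt_of_le hBnn with hB0 | hBpos
  · -- B = 0 : ψ vanishes a.e. on Ioc r b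
    have hint : IntegrableOn (fun s : ℝ => s ^ 2 * ψ s ^ 2) (Ioc r b) :=
      hcont2.integrableOn_Ioc
    have h0 : (fun s : ℝ => s ^ 2 * ψ s ^ 2) =ᵐ[volume.restrict (Ioc r b)] 0 := by
      rw [← integral_eq_zero_iff_of_nonneg (fun s => mul_nonneg (sq_nonneg _) (sq_nonneg _)) hint]
      rw [hB, intervalIntegral.integral_of_le hrb] at hB0
      exact hB0.symm
    have hψ0' : (fun s : ℝ => ψ s) =ᵐ[volume.restrict (Ioc r b)] 0 := by
      filter_upwards [h0, ae_restrict_mem measurableSet_Ioc] with s hs hsmem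
      simp only [Pi.zero_apply] at hs ⊢
      have hs2 : (s:ℝ) ^ 2 ≠ 0 := pow_ne_zero _ (by nlinarith [hsmem.1])
      rcases mul_eq_zero.1 hs with h | h
      · exact absurd h hs2
      · exact pow_eq_zero_iff (two_ne_zero) |>.1 h
    have hz : ∫ s in r..b, ψ s = 0 := by
      rw [intervalIntegral.integral_of_le hrb, integral_congr_ae hψ0']
      simp
    rw [hz]
    positivity
  · -- B > 0
    set t := Real.sqrt B * Real.sqrt r with ht
    have hsr : 0 < Real.sqrt r := Real.sqrt_pos.2 hr
    have hsB : 0 < Real.sqrt B := Real.sqrt_pos.2 hBpos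
    have htpos : 0 < t := mul_pos hsB hsr
    have key : ∀ s ∈ Icc r b, ψ s ≤ t / 2 * s ^ (-2 : ℤ) + 1 / (2 * t) * (s ^ 2 * ψ s ^ 2) := by
      intro s hs
      have hspos : 0 < s := lt_of_lt_of_le hr hs.1
      have h2 : s ^ (-2 : ℤ) = s⁻¹ ^ 2 := by
        rw [zpow_neg, inv_pow, zpow_two, sq]
      have hinv : s * s⁻¹ = 1 := mul_inv_cancel₀ hspos.ne'
      rw [h2]
      have hs0 : s ≠ 0 := hspos.ne'
      have ht0 : t ≠ 0 := htpos.ne'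
      have hrearr : t / 2 * s⁻¹ ^ 2 + 1 / (2 * t) * (s ^ 2 * ψ s ^ 2) - ψ s
          = 1 / (2 * t) * (t * s⁻¹ - s * ψ s) ^ 2 + ψ s * (s * s⁻¹ - 1) := by
        field_simp
        ring
      rw [hinv] at hrearr
      simp only [sub_self, mul_zero, add_zero] at hrearr
      have hsq : 0 ≤ 1 / (2 * t) * (t * s⁻¹ - s * ψ s) ^ 2 :=
        mul_nonneg (by positivity) (sq_nonneg _)
      linarith
    have hposOn : ∀ x ∈ uIcc r b, (0:ℝ) < x := by
      intro x hx
      rw [uIcc_of_le hrb] at hx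
      exact lt_of_lt_of_le hr hx.1
    have c1 : ContinuousOn (fun s : ℝ => s ^ (-2 : ℤ)) (uIcc r b) :=
      continuousOn_id.zpow₀ _ (fun x hx => Or.inl (hposOn x hx).ne')
    have hcont_rhs : ContinuousOn
        (fun s : ℝ => t / 2 * s ^ (-2 : ℤ) + 1 / (2 * t) * (s ^ 2 * ψ s ^ 2)) (uIcc r b) :=
      (continuousOn_const.mul c1).add (continuousOn_const.mul hcont2.continuousOn)
    have hmono : ∫ s in r..b, ψ s ≤
        ∫ s in r..b, (t / 2 * s ^ (-2 : ℤ) + 1 / (2 * t) * (s ^ 2 * ψ s ^ 2)) :=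
      intervalIntegral.integral_mono_on hrb (hψ.intervalIntegrable r b)
        hcont_rhs.intervalIntegrable key
    have h0mem : (0:ℝ) ∉ uIcc r b := by
      intro h
      exact absurd (hposOn 0 h) (lt_irrefl 0)
    have hzpow : ∫ s in r..b, s ^ (-2 : ℤ) = r⁻¹ - b⁻¹ := by
      rw [integral_zpow (Or.inr ⟨by norm_num, h0mem⟩)]
      norm_num
      ring
    have hsplit : ∫ s in r..b, (t / 2 * s ^ (-2 : ℤ) + 1 / (2 * t) * (s ^ 2 * ψ s ^ 2))
        = t / 2 * (r⁻¹ - b⁻¹) + 1 / (2 * t) * B := by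
      rw [intervalIntegral.integral_add (f := fun s : ℝ => t / 2 * s ^ (-2 : ℤ)) ((continuousOn_const.mul c1).intervalIntegrable)
          ((hcont2.intervalIntegrable r b).const_mul _),
        intervalIntegral.integral_const_mul, intervalIntegral.integral_const_mul, hzpow]
    have hfin : t / 2 * (r⁻¹ - b⁻¹) + 1 / (2 * t) * B ≤ Real.sqrt r⁻¹ * Real.sqrt B := by
      have hbinv : 0 ≤ b⁻¹ := inv_nonneg.2 (le_trans hr.le hrb)
      have h1 : t / 2 * (r⁻¹ - b⁻¹) ≤ t / 2 * r⁻¹ := by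
        apply mul_le_mul_of_nonneg_left _ (by positivity)
        linarith
      have h2 : Real.sqrt r * Real.sqrt r = r := Real.mul_self_sqrt hr.le
      have h3 : Real.sqrt B * Real.sqrt B = B := Real.mul_self_sqrt hBnn
      have heq : t / 2 * r⁻¹ + 1 / (2 * t) * B = Real.sqrt r⁻¹ * Real.sqrt B := by
        rw [Real.sqrt_inv, ht]
        field_simp
        linear_combination (Real.sqrt B ^ 2) * h2 - r * h3
      linarith
    calc ∫ s in r..b, ψ s ≤ _ := hmono
      _ = _ := hsplit
      _ ≤ _ := hfin

lemma ray_ftc {v : E → ℝ}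
    (hv : ContDiff ℝ (⊤ : ℕ∞) v) {ω : E} (hω : ‖ω‖ = 1) {r b : ℝ} (hr : 0 < r) (hrb : r ≤ b)
    (hb : v (b • ω) = 0) :
    |v (r • ω)| ≤ Real.sqrt r⁻¹ *
      Real.sqrt (∫ s in r..b, s ^ 2 * ‖fderiv ℝ v (s • ω)‖ ^ 2) := by
  have hcd : Continuous (fderiv ℝ v) := hv.continuous_fderiv (by simp)
  have hcA : Continuous fun s : ℝ => fderiv ℝ v (s • ω) :=
    hcd.comp (continuous_id.smul continuous_const)
  have hcψ' : Continuous fun s : ℝ => (fderiv ℝ v (s • ω)) ω := hcA.clm_apply continuous_const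
  have hcψ : Continuous fun s : ℝ => ‖fderiv ℝ v (s • ω)‖ := hcA.norm
  have hd : ∀ s : ℝ, HasDerivAt (fun u : ℝ => v (u • ω)) ((fderiv ℝ v (s • ω)) ω) s := by
    intro s
    have h1 : HasDerivAt (fun u : ℝ => u • ω) ω s := by
      simpa using (hasDerivAt_id s).smul_const ω
    exact ((hv.differentiable (by simp) (s • ω)).hasFDerivAt).comp_hasDerivAt s h1
  have hftc : ∫ s in r..b, (fderiv ℝ v (s • ω)) ω = v (b • ω) - v (r • ω) :=
    intervalIntegral.integral_eq_sub_of_hasDerivAt (fun s _ => hd s)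
      (hcψ'.intervalIntegrable r b)
  have habs : |v (r • ω)| ≤ ∫ s in r..b, ‖fderiv ℝ v (s • ω)‖ := by
    have h1 : |v (r • ω)| = |∫ s in r..b, (fderiv ℝ v (s • ω)) ω| := by
      rw [hftc, hb, zero_sub, abs_neg]
    rw [h1]
    calc |∫ s in r..b, (fderiv ℝ v (s • ω)) ω| ≤ ∫ s in r..b, |(fderiv ℝ v (s • ω)) ω| :=
          intervalIntegral.abs_integral_le_integral_abs hrb
      _ ≤ ∫ s in r..b, ‖fderiv ℝ v (s • ω)‖ := by
          refine intervalIntegral.integral_mono_on hrb (hcψ'.abs.intervalIntegrable r b)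
            (hcψ.intervalIntegrable r b) fun s _ => ?_
          simpa [hω, Real.norm_eq_abs] using (fderiv ℝ v (s • ω)).le_opNorm ω
  exact le_trans habs (ray_cs hcψ hr hrb)

variable [MeasurableSpace E]
  [BorelSpace E] [FiniteDimensional ℝ E] [Nontrivial E]
  (μ : Measure E) [μ.IsAddHaarMeasure]

open scoped ENNReal

lemma lintegral_polar (F : E → ℝ≥0∞) (hF : Measurable F) :
    ∫⁻ x, F x ∂μ = ∫⁻ ω : sphere (0:E) 1,
      ∫⁻ s in Ioi (0:ℝ), ENNReal.ofReal (s ^ (Module.finrank ℝ E - 1)) * F (s • (ω:E)) ∂volume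
      ∂μ.toSphere := by
  have hsm : Measurable fun p : sphere (0:E) 1 × Ioi (0:ℝ) => F ((p.2 : ℝ) • (p.1 : E)) :=
    hF.comp ((measurable_subtype_coe.comp measurable_snd).smul
      (measurable_subtype_coe.comp measurable_fst))
  calc ∫⁻ x, F x ∂μ = ∫⁻ x in ({0}ᶜ : Set E), F x ∂μ := by
        rw [restrict_compl_singleton]
    _ = ∫⁻ x : ({0}ᶜ : Set E), F x ∂(μ.comap (↑)) := by
        rw [lintegral_subtype_comap (measurableSet_singleton 0).compl]
    _ = ∫⁻ p : sphere (0:E) 1 × Ioi (0:ℝ), F ((p.2 : ℝ) • (p.1 : E))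
          ∂(μ.toSphere.prod (Measure.volumeIoiPow (Module.finrank ℝ E - 1))) := by
        rw [← μ.measurePreserving_homeomorphUnitSphereProd.lintegral_comp hsm]
        refine lintegral_congr fun x => ?_
        simp only [homeomorphUnitSphereProd_apply_fst_coe, homeomorphUnitSphereProd_apply_snd_coe]
        rw [smul_inv_smul₀ (norm_ne_zero_iff.2 x.2)]
    _ = ∫⁻ ω : sphere (0:E) 1, ∫⁻ r : Ioi (0:ℝ), F ((r : ℝ) • (ω : E))
          ∂(Measure.volumeIoiPow (Module.finrank ℝ E - 1)) ∂μ.toSphere :=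
        lintegral_prod _ hsm.aemeasurable
    _ = _ := by
        refine lintegral_congr fun ω => ?_
        rw [Measure.volumeIoiPow, lintegral_withDensity_eq_lintegral_mul _
          (by exact (measurable_subtype_coe.pow_const _).ennreal_ofReal)
          (show Measurable fun r : Ioi (0:ℝ) => F ((r:ℝ) • (ω:E)) from
            hF.comp (measurable_subtype_coe.smul measurable_const)),
          ← lintegral_subtype_comap measurableSet_Ioi
            (fun s : ℝ => ENNReal.ofReal (s ^ (Module.finrank ℝ E - 1)) * F (s • (ω:E)))]
        rfl

end Aux

open scoped ENNReal


/-- The surface measure on the unit sphere of `ℝⁿ`. -/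
noncomputable def sphereMeasure (n : ℕ) :
    Measure (Metric.sphere (0 : EuclideanSpace ℝ (Fin n)) 1) :=
  (volume : Measure (EuclideanSpace ℝ (Fin n))).toSphere

/-- `‖v(r·)‖_{L²(Sⁿ⁻¹)}`, the angular `L²` norm of `v` on the sphere of radius `r`. -/
noncomputable def sphereL2 (n : ℕ) (v : EuclideanSpace ℝ (Fin n) → ℝ) (r : ℝ) : ℝ :=
  Real.sqrt (∫ ω, (v (r • (ω : EuclideanSpace ℝ (Fin n)))) ^ 2 ∂(sphereMeasure n))

/-- for `n ≥ 3` there is a constant `C = C(n) > 0` such that for every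
smooth compactly supported `v` on `ℝⁿ` and every `R > 0`,
`R^{1/2} ‖v‖_{L^∞_r L^2_ω(|x|>R)} ≤ C ‖ |x|^{-(n-3)/2} ∇v ‖_{L²(|x|>R)}`. -/
theorem hardy_trace_estimate (n : ℕ) (hn : 3 ≤ n) :
    ∃ C > (0:ℝ), ∀ v : EuclideanSpace ℝ (Fin n) → ℝ,
      ContDiff ℝ (⊤ : ℕ∞) v → HasCompactSupport v → ∀ R > (0:ℝ),
      R ^ ((1:ℝ)/2) * (⨆ r ∈ Set.Ioi R, sphereL2 n v r) ≤
        C * Real.sqrt (∫ x in {x : EuclideanSpace ℝ (Fin n) | R < ‖x‖},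
          ‖x‖ ^ (-((n:ℝ) - 3)) * ‖fderiv ℝ v x‖ ^ 2) := by
  refine ⟨1, one_pos, fun v hv1 hv2 R hR => ?_⟩
  haveI : NeZero n := ⟨by omega⟩
  have h3n : (3:ℝ) ≤ (n:ℝ) := by exact_mod_cast hn
  have hvc : Continuous v := hv1.continuous
  have hD : Continuous (fderiv ℝ v) := hv1.continuous_fderiv (by simp)
  obtain ⟨M, hM⟩ := hv2.isBounded.subset_closedBall (0 : EuclideanSpace ℝ (Fin n))
  have hvz : ∀ x : EuclideanSpace ℝ (Fin n), M < ‖x‖ → v x = 0 := by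
    intro x hx
    refine image_eq_zero_of_notMem_tsupport fun h => ?_
    exact absurd (mem_closedBall_zero_iff.1 (hM h)) (not_le.2 hx)
  have hDz : ∀ x : EuclideanSpace ℝ (Fin n), M < ‖x‖ → fderiv ℝ v x = 0 := by
    intro x hx
    by_contra h
    exact absurd (mem_closedBall_zero_iff.1 (hM (support_fderiv_subset ℝ (Function.mem_support.2 h)))) (not_le.2 hx)
  set W : EuclideanSpace ℝ (Fin n) → ℝ := fun x => ‖x‖ ^ (-((n:ℝ) - 3)) * ‖fderiv ℝ v x‖ ^ 2 with hW
  have hrm : Measurable fun x : EuclideanSpace ℝ (Fin n) => ‖x‖ ^ (-((n:ℝ) - 3)) := by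
    have heq : (fun x : EuclideanSpace ℝ (Fin n) => ‖x‖ ^ (-((n:ℝ) - 3)))
        = Set.piecewise {x : EuclideanSpace ℝ (Fin n) | ‖x‖ = 0} (fun _ => (0:ℝ) ^ (-((n:ℝ) - 3)))
          (fun x => Real.exp (Real.log ‖x‖ * (-((n:ℝ) - 3)))) := by
      classical
      funext x
      by_cases h : ‖x‖ = 0
      · rw [Set.piecewise_eq_of_mem _ _ _ (show x ∈ {x : EuclideanSpace ℝ (Fin n) | ‖x‖ = 0}
          from h), h]
      · rw [Set.piecewise_eq_of_notMem _ _ _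
          (show x ∉ {x : EuclideanSpace ℝ (Fin n) | ‖x‖ = 0} from h),
          Real.rpow_def_of_pos ((norm_nonneg x).lt_of_ne (Ne.symm h))]
    classical
    rw [heq]
    exact Measurable.piecewise (measurable_norm (measurableSet_singleton 0)) measurable_const
      (Real.measurable_exp.comp ((Real.measurable_log.comp measurable_norm).mul measurable_const))
  have hWm : Measurable W := hrm.mul ((hD.norm.pow 2).measurable)
  have hWnn : ∀ x, 0 ≤ W x := fun x =>
    mul_nonneg (Real.rpow_nonneg (norm_nonneg x) _) (sq_nonneg _)
  have hsetm : MeasurableSet {x : EuclideanSpace ℝ (Fin n) | R < ‖x‖} :=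
    measurableSet_lt measurable_const measurable_norm
  set I : ℝ≥0∞ := ∫⁻ x in {x : EuclideanSpace ℝ (Fin n) | R < ‖x‖}, ENNReal.ofReal (W x) ∂volume with hI
  -- I is finite
  have hIfin : I ≠ ⊤ := by
    have h1 : I ≤ ∫⁻ x in {x : EuclideanSpace ℝ (Fin n) | R < ‖x‖},
        ENNReal.ofReal (R ^ (-((n:ℝ)-3)) * ‖fderiv ℝ v x‖ ^ 2) ∂volume := by
      refine setLIntegral_mono ((measurable_const.mul ((hD.norm.pow 2).measurable)).ennreal_ofReal)
        fun x hx => ENNReal.ofReal_le_ofReal ?_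
      exact mul_le_mul_of_nonneg_right
        (Real.rpow_le_rpow_of_nonpos hR (le_of_lt hx) (by linarith)) (sq_nonneg _)
    have hPsi : Continuous (fun x : EuclideanSpace ℝ (Fin n) => R ^ (-((n:ℝ)-3)) * ‖fderiv ℝ v x‖ ^ 2) :=
      continuous_const.mul (hD.norm.pow 2)
    have hPsiCS : HasCompactSupport (fun x : EuclideanSpace ℝ (Fin n) => R ^ (-((n:ℝ)-3)) * ‖fderiv ℝ v x‖ ^ 2) := by
      refine HasCompactSupport.intro (isCompact_closedBall (0 : EuclideanSpace ℝ (Fin n)) M) fun x hx => ?_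
      rw [hDz x (not_le.1 fun h => hx (mem_closedBall_zero_iff.2 h))]
      simp
    have hPsiInt : Integrable (fun x : EuclideanSpace ℝ (Fin n) =>
        R ^ (-((n:ℝ)-3)) * ‖fderiv ℝ v x‖ ^ 2) volume :=
      hPsi.integrable_of_hasCompactSupport hPsiCS
    refine ne_top_of_le_ne_top ?_ (h1.trans (setLIntegral_le_lintegral _ _))
    exact ne_of_lt (lt_of_le_of_lt
      (lintegral_mono fun x => Real.ofReal_le_enorm _) hPsiInt.hasFiniteIntegral)
  -- polar coordinates
  have hFm : Measurable ({x : EuclideanSpace ℝ (Fin n) | R < ‖x‖}.indicator (fun x => ENNReal.ofReal (W x))) :=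
    (hWm.ennreal_ofReal).indicator hsetm
  have hpolar : ∫⁻ ω : Metric.sphere (0 : EuclideanSpace ℝ (Fin n)) 1,
      (∫⁻ s in Set.Ioi R, ENNReal.ofReal (s ^ 2 * ‖fderiv ℝ v (s • (ω : EuclideanSpace ℝ (Fin n)))‖ ^ 2) ∂volume)
      ∂(sphereMeasure n) = I := by
    have hp := lintegral_polar (volume : Measure (EuclideanSpace ℝ (Fin n))) _ hFm
    rw [lintegral_indicator hsetm] at hp
    rw [hI, hp]
    have hrk : Module.finrank ℝ (EuclideanSpace ℝ (Fin n)) = n := finrank_euclideanSpace_fin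
    have hsubRI : Set.Ioi R ⊆ Set.Ioi (0:ℝ) := fun x hx => lt_trans hR hx
    refine lintegral_congr fun ω => ?_
    have hω : ‖(ω : EuclideanSpace ℝ (Fin n))‖ = 1 := mem_sphere_zero_iff_norm.1 ω.2
    have hstep : ∀ s : ℝ, s ∈ Set.Ioi (0:ℝ) →
        ENNReal.ofReal (s ^ (Module.finrank ℝ (EuclideanSpace ℝ (Fin n)) - 1)) *
          ({x : EuclideanSpace ℝ (Fin n) | R < ‖x‖}.indicator (fun x => ENNReal.ofReal (W x)) (s • (ω : EuclideanSpace ℝ (Fin n))))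
        = (Set.Ioi R).indicator
            (fun s : ℝ => ENNReal.ofReal (s ^ 2 * ‖fderiv ℝ v (s • (ω : EuclideanSpace ℝ (Fin n)))‖ ^ 2)) s := by
      intro s hs
      have hs0 : (0:ℝ) < s := hs
      have hns : ‖s • (ω : EuclideanSpace ℝ (Fin n))‖ = s := by
        rw [norm_smul, hω, mul_one, Real.norm_eq_abs, abs_of_pos hs0]
      by_cases hRs : R < s
      · rw [Set.indicator_of_mem (show (s • (ω : EuclideanSpace ℝ (Fin n))) ∈ {x : EuclideanSpace ℝ (Fin n) | R < ‖x‖} by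
            simp only [Set.mem_setOf_eq, hns]; exact hRs),
          Set.indicator_of_mem (Set.mem_Ioi.2 hRs)]
        rw [hW]
        simp only [hns]
        rw [← ENNReal.ofReal_mul (pow_nonneg hs0.le _), ← mul_assoc, hrk]
        congr 2
        rw [← Real.rpow_natCast s (n-1), ← Real.rpow_add hs0,
          show ((n-1:ℕ):ℝ) + -((n:ℝ)-3) = 2 by
            rw [Nat.cast_sub (by omega : 1 ≤ n)]; push_cast; ring,
          Real.rpow_two]
      · rw [Set.indicator_of_notMem (show (s • (ω : EuclideanSpace ℝ (Fin n))) ∉ {x : EuclideanSpace ℝ (Fin n) | R < ‖x‖} by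
            simp only [Set.mem_setOf_eq, hns]; exact hRs),
          Set.indicator_of_notMem (by simpa using hRs), mul_zero]
    rw [setLIntegral_congr_fun measurableSet_Ioi hstep,
      lintegral_indicator measurableSet_Ioi, Measure.restrict_restrict measurableSet_Ioi,
      Set.inter_eq_left.2 hsubRI]
  -- per-omega real integrals
  set G : Metric.sphere (0 : EuclideanSpace ℝ (Fin n)) 1 → ℝ :=
    fun ω => ∫ s in Set.Ioi R, s ^ 2 * ‖fderiv ℝ v (s • (ω : EuclideanSpace ℝ (Fin n)))‖ ^ 2 with hG
  have hGcont : ∀ ω : Metric.sphere (0 : EuclideanSpace ℝ (Fin n)) 1,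
      Continuous fun s : ℝ => s ^ 2 * ‖fderiv ℝ v (s • (ω : EuclideanSpace ℝ (Fin n)))‖ ^ 2 := fun ω =>
    (continuous_pow 2).mul (((hD.comp (continuous_id.smul continuous_const)).norm).pow 2)
  have hGint : ∀ ω : Metric.sphere (0 : EuclideanSpace ℝ (Fin n)) 1,
      IntegrableOn (fun s : ℝ => s ^ 2 * ‖fderiv ℝ v (s • (ω : EuclideanSpace ℝ (Fin n)))‖ ^ 2) (Set.Ioi R) := by
    intro ω
    have hω : ‖(ω : EuclideanSpace ℝ (Fin n))‖ = 1 := mem_sphere_zero_iff_norm.1 ω.2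
    refine ((hGcont ω).integrable_of_hasCompactSupport
      (HasCompactSupport.intro (isCompact_Icc (a := -M) (b := M)) fun s hs => ?_)).integrableOn
    have hMs : M < |s| := by
      rcases not_and_or.1 hs with h | h
      · linarith [neg_le_abs s, not_le.1 h]
      · linarith [le_abs_self s, not_le.1 h]
    rw [hDz _ (by rw [norm_smul, hω, mul_one, Real.norm_eq_abs]; exact hMs)]
    simp
  set G' : Metric.sphere (0 : EuclideanSpace ℝ (Fin n)) 1 → ℝ≥0∞ :=
    fun ω => ∫⁻ s in Set.Ioi R, ENNReal.ofReal (s ^ 2 * ‖fderiv ℝ v (s • (ω : EuclideanSpace ℝ (Fin n)))‖ ^ 2) ∂volume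
    with hG'
  have hGofReal : ∀ ω, ENNReal.ofReal (G ω) = G' ω := fun ω =>
    ofReal_integral_eq_lintegral_ofReal (hGint ω)
      (ae_of_all _ fun s => mul_nonneg (sq_nonneg _) (sq_nonneg _))
  have hGnn : ∀ ω, 0 ≤ G ω := fun ω =>
    integral_nonneg fun s => mul_nonneg (sq_nonneg _) (sq_nonneg _)
  -- pointwise-in-r estimate
  have key : ∀ r ∈ Set.Ioi R, ∀ ω : Metric.sphere (0 : EuclideanSpace ℝ (Fin n)) 1,
      (v (r • (ω : EuclideanSpace ℝ (Fin n)))) ^ 2 ≤ r⁻¹ * G ω := by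
    intro r hrR ω
    have hω : ‖(ω : EuclideanSpace ℝ (Fin n))‖ = 1 := mem_sphere_zero_iff_norm.1 ω.2
    have hr0 : (0:ℝ) < r := lt_trans hR hrR
    set b := max r (M+1) with hb
    have hrb : r ≤ b := le_max_left _ _
    have hbM : M < b := lt_of_lt_of_le (lt_add_one M) (le_max_right _ _)
    have hb0 : (0:ℝ) < b := lt_of_lt_of_le hr0 hrb
    have hvb : v (b • (ω : EuclideanSpace ℝ (Fin n))) = 0 := hvz _ (by
      rw [norm_smul, hω, mul_one, Real.norm_eq_abs, abs_of_pos hb0]; exact hbM)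
    have h1 := ray_ftc hv1 hω hr0 hrb hvb
    have hint_nn : (0:ℝ) ≤ ∫ s in r..b, s ^ 2 * ‖fderiv ℝ v (s • (ω : EuclideanSpace ℝ (Fin n)))‖ ^ 2 :=
      intervalIntegral.integral_nonneg hrb fun s _ => mul_nonneg (sq_nonneg _) (sq_nonneg _)
    have h2 : ∫ s in r..b, s ^ 2 * ‖fderiv ℝ v (s • (ω : EuclideanSpace ℝ (Fin n)))‖ ^ 2 ≤ G ω := by
      rw [intervalIntegral.integral_of_le hrb]
      exact setIntegral_mono_set (hGint ω)
        (ae_of_all _ fun s => mul_nonneg (sq_nonneg _) (sq_nonneg _))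
        (HasSubset.Subset.eventuallyLE fun s hs => lt_trans hrR hs.1)
    calc (v (r • (ω : EuclideanSpace ℝ (Fin n)))) ^ 2 = |v (r • (ω : EuclideanSpace ℝ (Fin n)))| ^ 2 := (sq_abs _).symm
      _ ≤ (Real.sqrt r⁻¹ * Real.sqrt (∫ s in r..b, s ^ 2 * ‖fderiv ℝ v (s • (ω : EuclideanSpace ℝ (Fin n)))‖ ^ 2)) ^ 2 :=
          pow_le_pow_left₀ (abs_nonneg _) h1 2
      _ = r⁻¹ * ∫ s in r..b, s ^ 2 * ‖fderiv ℝ v (s • (ω : EuclideanSpace ℝ (Fin n)))‖ ^ 2 := by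
          rw [mul_pow, Real.sq_sqrt (inv_nonneg.2 hr0.le), Real.sq_sqrt hint_nn]
      _ ≤ r⁻¹ * G ω := mul_le_mul_of_nonneg_left h2 (inv_nonneg.2 hr0.le)
  -- sphere L2 estimate
  have hsl2le : ∀ r ∈ Set.Ioi R, sphereL2 n v r ≤
      Real.sqrt R⁻¹ * Real.sqrt I.toReal := by
    intro r hrR
    have hr0 : (0:ℝ) < r := lt_trans hR hrR
    have hcont_sph : Continuous fun ω : Metric.sphere (0 : EuclideanSpace ℝ (Fin n)) 1 => (v (r • (ω : EuclideanSpace ℝ (Fin n)))) ^ 2 :=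
      Continuous.pow (f := fun ω : Metric.sphere (0 : EuclideanSpace ℝ (Fin n)) 1 => v (r • (ω : EuclideanSpace ℝ (Fin n)))) (hvc.comp (continuous_subtype_val.const_smul r)) 2
    have e1 : ∫ ω, (v (r • (ω : EuclideanSpace ℝ (Fin n)))) ^ 2 ∂(sphereMeasure n)
        = (∫⁻ ω, ENNReal.ofReal ((v (r • (ω : EuclideanSpace ℝ (Fin n)))) ^ 2) ∂(sphereMeasure n)).toReal :=
      integral_eq_lintegral_of_nonneg_ae (ae_of_all _ fun ω => sq_nonneg _)
        hcont_sph.aestronglyMeasurable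
    have e2 : ∫⁻ ω, ENNReal.ofReal ((v (r • (ω : EuclideanSpace ℝ (Fin n)))) ^ 2) ∂(sphereMeasure n)
        ≤ ENNReal.ofReal r⁻¹ * I := by
      calc ∫⁻ ω, ENNReal.ofReal ((v (r • (ω : EuclideanSpace ℝ (Fin n)))) ^ 2) ∂(sphereMeasure n)
          ≤ ∫⁻ ω, ENNReal.ofReal r⁻¹ * G' ω ∂(sphereMeasure n) := by
            refine lintegral_mono fun ω => ?_
            rw [← hGofReal ω, ← ENNReal.ofReal_mul (inv_nonneg.2 hr0.le)]
            exact ENNReal.ofReal_le_ofReal (key r hrR ω)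
        _ = ENNReal.ofReal r⁻¹ * ∫⁻ ω, G' ω ∂(sphereMeasure n) :=
            lintegral_const_mul' _ _ ENNReal.ofReal_ne_top
        _ = ENNReal.ofReal r⁻¹ * I := by rw [hG']; rw [hpolar]
    have e3 : (∫⁻ ω, ENNReal.ofReal ((v (r • (ω : EuclideanSpace ℝ (Fin n)))) ^ 2) ∂(sphereMeasure n)).toReal
        ≤ r⁻¹ * I.toReal := by
      have h := ENNReal.toReal_mono (ENNReal.mul_ne_top ENNReal.ofReal_ne_top hIfin) e2
      rwa [ENNReal.toReal_mul, ENNReal.toReal_ofReal (inv_nonneg.2 hr0.le)] at h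
    calc sphereL2 n v r
        = Real.sqrt ((∫⁻ ω, ENNReal.ofReal ((v (r • (ω : EuclideanSpace ℝ (Fin n)))) ^ 2) ∂(sphereMeasure n)).toReal) := by
          rw [sphereL2, e1]
      _ ≤ Real.sqrt (r⁻¹ * I.toReal) := Real.sqrt_le_sqrt e3
      _ = Real.sqrt r⁻¹ * Real.sqrt I.toReal := Real.sqrt_mul (inv_nonneg.2 hr0.le) _
      _ ≤ Real.sqrt R⁻¹ * Real.sqrt I.toReal :=
          mul_le_mul_of_nonneg_right
            (Real.sqrt_le_sqrt (inv_anti₀ hR hrR.le)) (Real.sqrt_nonneg _)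
  have hnn : (0:ℝ) ≤ Real.sqrt R⁻¹ * Real.sqrt I.toReal :=
    mul_nonneg (Real.sqrt_nonneg _) (Real.sqrt_nonneg _)
  have hsup : (⨆ r ∈ Set.Ioi R, sphereL2 n v r) ≤ Real.sqrt R⁻¹ * Real.sqrt I.toReal :=
    Real.iSup_le (fun r => Real.iSup_le (fun hr => hsl2le r hr) hnn) hnn
  have hRe : ∫ x in {x : EuclideanSpace ℝ (Fin n) | R < ‖x‖}, W x ∂volume = I.toReal := by
    rw [hI]
    exact integral_eq_lintegral_of_nonneg_ae (ae_of_all _ fun x => hWnn x)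
      hWm.aestronglyMeasurable
  calc R ^ ((1:ℝ)/2) * (⨆ r ∈ Set.Ioi R, sphereL2 n v r)
      ≤ R ^ ((1:ℝ)/2) * (Real.sqrt R⁻¹ * Real.sqrt I.toReal) :=
        mul_le_mul_of_nonneg_left hsup (Real.rpow_nonneg hR.le _)
    _ = Real.sqrt I.toReal := by
        rw [← Real.sqrt_eq_rpow, ← mul_assoc, ← Real.sqrt_mul hR.le,
          mul_inv_cancel₀ hR.ne', Real.sqrt_one, one_mul]
    _ = 1 * Real.sqrt (∫ x in {x : EuclideanSpace ℝ (Fin n) | R < ‖x‖},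
          ‖x‖ ^ (-((n:ℝ) - 3)) * ‖fderiv ℝ v x‖ ^ 2) := by
        rw [one_mul, ← hRe]
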